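/- arXiv:2204.12483 — 2 statements merged into one kernel-verified Lean document; each statement's English description precedes it below -/
import Mathlib

section
/- The map ℤ/rℤ × ℤ/mℤ → G sending (a,b) to η₁^a · η₂^b is a well-defined bijection of sets (in particular η₁ and η₂ generate G). -/
open Complex

/-- The homomorphism `φ : (ℂ*)³ → (ℂ*)³`, `φ(t₁,t₂,t₃) = (t₁^r, t₁^{-s} t₂^m, t₁t₂t₃)`. -/
noncomputable def phi (r m s : ℕ) : (ℂˣ × ℂˣ × ℂˣ) →* (ℂˣ × ℂˣ × ℂˣ) where
  toFun t := (t.1 ^ r, t.1 ^ (-(s : ℤ)) * t.2.1 ^ m, t.1 * t.2.1 * t.2.2)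
  map_one' := by simp
  map_mul' x y := by
    refine Prod.ext ?_ (Prod.ext ?_ ?_) <;> dsimp <;>
      simp [mul_pow, mul_zpow, mul_comm, mul_assoc, mul_left_comm]

/-- `exp z` as an element of `ℂˣ`. -/
noncomputable def unitExp (z : ℂ) : ℂˣ := Units.mk0 (Complex.exp z) (Complex.exp_ne_zero z)

/-- `η₁ = (e^{2πi/r}, e^{2πi s/(rm)}, e^{-2πi(m+s)/(rm)})`. -/
noncomputable def eta1 (r m s : ℕ) : ℂˣ × ℂˣ × ℂˣ :=
  (unitExp (2 * (Real.pi : ℂ) * Complex.I / (r : ℂ)),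
   unitExp (2 * (Real.pi : ℂ) * Complex.I * (s : ℂ) / ((r : ℂ) * (m : ℂ))),
   unitExp (-(2 * (Real.pi : ℂ) * Complex.I * ((m : ℂ) + (s : ℂ))) / ((r : ℂ) * (m : ℂ))))

/-- `η₂ = (1, e^{2πi/m}, e^{-2πi/m})`. -/
noncomputable def eta2 (m : ℕ) : ℂˣ × ℂˣ × ℂˣ :=
  (1,
   unitExp (2 * (Real.pi : ℂ) * Complex.I / (m : ℂ)),
   unitExp (-(2 * (Real.pi : ℂ) * Complex.I) / (m : ℂ)))

/- On `G = ker φ` the first coordinate is an `r`-th root of unity, the second is an `m`-th root of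
unity as soon as the first is `1`, and the third is `(t₁t₂)⁻¹`. The first coordinate of `η₁` is a
primitive `r`-th root of unity and `η₂ = (1, ζ, ζ⁻¹)` with `ζ` a primitive `m`-th one. So any
`t ∈ G` becomes `1` after dividing first by `η₁^a` to make `t₁ = 1`, then by `η₂^b` to make
`t₂ = 1`; uniqueness of `a < r`, `b < m` is read off the first two coordinates. -/

section CommGroup

variable {M : Type*} [CommGroup M] {r m : ℕ} {x y : M × M × M}

theorem injective_pow_mul_pow [NeZero r] [NeZero m] (hx : IsPrimitiveRoot x.1 r)
    (hy₁ : y.1 = 1) (hy : IsPrimitiveRoot y.2.1 m) :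
    Function.Injective fun ab : ZMod r × ZMod m => x ^ ab.1.val * y ^ ab.2.val := by
  rintro ⟨a, b⟩ ⟨a', b'⟩ h
  have h₁ : x.1 ^ a.val = x.1 ^ a'.val := by
    simpa [hy₁] using congrArg Prod.fst h
  have ha : a = a' := ZMod.val_injective r (hx.pow_inj (ZMod.val_lt a) (ZMod.val_lt a') h₁)
  subst ha
  have h₂ : y.2.1 ^ b.val = y.2.1 ^ b'.val := by
    simpa using congrArg (fun t => t.2.1) h
  rw [ZMod.val_injective m (hy.pow_inj (ZMod.val_lt b) (ZMod.val_lt b') h₂)]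

end CommGroup

section IsDomain

variable {R : Type*} [CommRing R] [IsDomain R] {r m : ℕ} {G : Subgroup (Rˣ × Rˣ × Rˣ)}
  {x y : Rˣ × Rˣ × Rˣ}

theorem exists_pow_mul_pow_eq_of_mem [NeZero r] [NeZero m] (hxG : x ∈ G) (hyG : y ∈ G)
    (hx : IsPrimitiveRoot x.1 r) (hy₁ : y.1 = 1) (hy : IsPrimitiveRoot y.2.1 m)
    (hG₁ : ∀ t ∈ G, t.1 ^ r = 1) (hG₂ : ∀ t ∈ G, t.1 = 1 → t.2.1 ^ m = 1)
    (hG₃ : ∀ t ∈ G, t.1 = 1 → t.2.1 = 1 → t = 1) {t : Rˣ × Rˣ × Rˣ} (ht : t ∈ G) :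
    ∃ a < r, ∃ b < m, x ^ a * y ^ b = t := by
  obtain ⟨a, ha, hxa⟩ :=
    hx.eq_pow_of_mem_rootsOfUnity ((_root_.mem_rootsOfUnity _ _).2 (hG₁ t ht))
  set u := (x ^ a)⁻¹ * t
  have hu : u ∈ G := G.mul_mem (G.inv_mem (G.pow_mem hxG a)) ht
  have hu₁ : u.1 = 1 := by simp [u, ← hxa]
  obtain ⟨b, hb, hyb⟩ :=
    hy.eq_pow_of_mem_rootsOfUnity ((_root_.mem_rootsOfUnity _ _).2 (hG₂ u hu hu₁))
  set v := (y ^ b)⁻¹ * u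
  have hv : v ∈ G := G.mul_mem (G.inv_mem (G.pow_mem hyG b)) hu
  have hv₁ : v.1 = 1 := by simp [v, hy₁, hu₁]
  have hv₂ : v.2.1 = 1 := by simp [v, ← hyb]
  refine ⟨a, ha, b, hb, ?_⟩
  have hv_one : (y ^ b)⁻¹ * ((x ^ a)⁻¹ * t) = 1 := hG₃ v hv hv₁ hv₂
  rwa [← mul_assoc, ← mul_inv_rev, inv_mul_eq_one] at hv_one

theorem bijOn_pow_mul_pow [NeZero r] [NeZero m] (hxG : x ∈ G) (hyG : y ∈ G)
    (hx : IsPrimitiveRoot x.1 r) (hy₁ : y.1 = 1) (hy : IsPrimitiveRoot y.2.1 m)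
    (hG₁ : ∀ t ∈ G, t.1 ^ r = 1) (hG₂ : ∀ t ∈ G, t.1 = 1 → t.2.1 ^ m = 1)
    (hG₃ : ∀ t ∈ G, t.1 = 1 → t.2.1 = 1 → t = 1) :
    Set.BijOn (fun ab : ZMod r × ZMod m => x ^ ab.1.val * y ^ ab.2.val) Set.univ G := by
  refine ⟨fun ab _ => G.mul_mem (G.pow_mem hxG _) (G.pow_mem hyG _),
    (injective_pow_mul_pow hx hy₁ hy).injOn, fun t ht => ?_⟩
  obtain ⟨a, ha, b, hb, rfl⟩ := exists_pow_mul_pow_eq_of_mem hxG hyG hx hy₁ hy hG₁ hG₂ hG₃ ht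
  exact ⟨(a, b), Set.mem_univ _, by simp [ZMod.val_cast_of_lt ha, ZMod.val_cast_of_lt hb]⟩

end IsDomain

section KerPhi

variable {r m s : ℕ} {t : ℂˣ × ℂˣ × ℂˣ}

theorem mem_ker_phi :
    t ∈ (phi r m s).ker ↔
      t.1 ^ r = 1 ∧ t.1 ^ (-(s : ℤ)) * t.2.1 ^ m = 1 ∧ t.1 * t.2.1 * t.2.2 = 1 := by
  rw [MonoidHom.mem_ker, Prod.ext_iff, Prod.ext_iff]
  rfl

theorem fst_pow_eq_one_of_mem_ker_phi (ht : t ∈ (phi r m s).ker) : t.1 ^ r = 1 :=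
  (mem_ker_phi.1 ht).1

theorem snd_fst_pow_eq_one_of_mem_ker_phi (ht : t ∈ (phi r m s).ker) (ht₁ : t.1 = 1) :
    t.2.1 ^ m = 1 := by
  simpa [ht₁] using (mem_ker_phi.1 ht).2.1

theorem eq_one_of_mem_ker_phi (ht : t ∈ (phi r m s).ker) (ht₁ : t.1 = 1) (ht₂ : t.2.1 = 1) :
    t = 1 := by
  obtain ⟨-, -, ht₃⟩ := mem_ker_phi.1 ht
  simp only [ht₁, ht₂, one_mul] at ht₃
  exact Prod.ext ht₁ (Prod.ext ht₂ ht₃)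

end KerPhi

theorem unitExp_add (z w : ℂ) : unitExp (z + w) = unitExp z * unitExp w := by
  ext; simp [unitExp, exp_add]

theorem unitExp_zpow (z : ℂ) (n : ℤ) : unitExp z ^ n = unitExp (n * z) := by
  ext; simp [unitExp, ← exp_int_mul]

theorem unitExp_pow (z : ℂ) (n : ℕ) : unitExp z ^ n = unitExp (n * z) := by
  simpa using unitExp_zpow z n

theorem unitExp_zero : unitExp 0 = 1 := by
  ext; simp [unitExp]

theorem unitExp_two_pi_mul_I : unitExp (2 * Real.pi * I) = 1 := by
  ext; simp [unitExp]

theorem eta1_mem_ker_phi {r m s : ℕ} (hr : r ≠ 0) (hm : m ≠ 0) :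
    eta1 r m s ∈ (phi r m s).ker := by
  have hr' : (r : ℂ) ≠ 0 := Nat.cast_ne_zero.2 hr
  have hm' : (m : ℂ) ≠ 0 := Nat.cast_ne_zero.2 hm
  simp only [mem_ker_phi, eta1, unitExp_pow, unitExp_zpow, ← unitExp_add]
  refine ⟨?_, ?_, ?_⟩
  · rw [← unitExp_two_pi_mul_I]; congr 1; field_simp
  · rw [← unitExp_zero]; congr 1; push_cast; field_simp; ring
  · rw [← unitExp_zero]; congr 1; field_simp; ring

theorem eta2_mem_ker_phi {r m s : ℕ} (hm : m ≠ 0) : eta2 m ∈ (phi r m s).ker := by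
  have hm' : (m : ℂ) ≠ 0 := Nat.cast_ne_zero.2 hm
  simp only [mem_ker_phi, eta2, one_pow, one_zpow, one_mul, unitExp_pow, ← unitExp_add]
  refine ⟨trivial, ?_, ?_⟩
  · rw [← unitExp_two_pi_mul_I]; congr 1; field_simp
  · rw [← unitExp_zero]; congr 1; ring

theorem isPrimitiveRoot_eta1_fst {r m s : ℕ} (hr : r ≠ 0) : IsPrimitiveRoot (eta1 r m s).1 r :=
  IsPrimitiveRoot.coe_units_iff.1 (isPrimitiveRoot_exp r hr)

theorem isPrimitiveRoot_eta2_snd_fst {m : ℕ} (hm : m ≠ 0) : IsPrimitiveRoot (eta2 m).2.1 m :=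
  IsPrimitiveRoot.coe_units_iff.1 (isPrimitiveRoot_exp m hm)

theorem eta_bijection_general (r m s : ℕ) (hr : 1 ≤ r) (hm : 1 ≤ m) :
    Set.BijOn (fun ab : ZMod r × ZMod m => eta1 r m s ^ ab.1.val * eta2 m ^ ab.2.val)
      Set.univ (MonoidHom.ker (phi r m s) : Set (ℂˣ × ℂˣ × ℂˣ)) := by
  have : NeZero r := ⟨by omega⟩
  have : NeZero m := ⟨by omega⟩
  exact bijOn_pow_mul_pow (eta1_mem_ker_phi (by omega) (by omega)) (eta2_mem_ker_phi (by omega))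
    (isPrimitiveRoot_eta1_fst (by omega)) rfl (isPrimitiveRoot_eta2_snd_fst (by omega))
    (fun _ => fst_pow_eq_one_of_mem_ker_phi) (fun _ => snd_fst_pow_eq_one_of_mem_ker_phi)
    (fun _ => eq_one_of_mem_ker_phi)

/-- The map `ℤ/rℤ × ℤ/mℤ → G`, `(a,b) ↦ η₁^a · η₂^b`, is a well-defined bijection of sets
onto `G = ker φ` (in particular `η₁` and `η₂` generate `G`). -/
theorem eta_bijection (r m s : ℕ) (hr : 1 ≤ r) (hm : 1 ≤ m) (hs : s ≤ r - 1) :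
    Set.BijOn (fun ab : ZMod r × ZMod m => eta1 r m s ^ ab.1.val * eta2 m ^ ab.2.val)
      Set.univ (MonoidHom.ker (phi r m s) : Set (ℂˣ × ℂˣ × ℂˣ)) :=
  eta_bijection_general r m s hr hm
end

section
/- Let ρ₂ : G → ℂ* be projection to the second coordinate. Then the image of ρ₂ is exactly the group μ_{mr/gcd(r,s)} of (mr/gcd(r,s))-th roots of unity in ℂ*, and the kernel of ρ₂ has cardinality gcd(r,s). (This realizes (m₂, r₂) = (gcd(r,s), m·r/gcd(r,s)).) -/
/-!
The kernel of `φ` consists of the triples `(t, ζ, (tζ)⁻¹)` with `t ^ r = 1` and `t ^ s = ζ ^ m`.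
So `ζ` lies in the image of `ρ₂` iff `ζ ^ m` is an `s`-th power of an `r`-th root of unity. In `ℂ`
these are exactly the `r / gcd(r, s)`-th roots of unity: if `ξ = η ^ gcd(r, s)` with `η ^ r = 1`,
Bézout `gcd(r, s) = a r + b s` gives `ξ = (η ^ b) ^ s`. The kernel of `ρ₂` is
`{(ζ, 1, ζ⁻¹) : ζ ^ r = ζ ^ s = 1} ≅ μ_{gcd(r, s)}`.
-/

open Complex

/-- `ρ₁ : G → ℂ*`, projection of `G = ker φ` to the first coordinate. -/
noncomputable def rho1 (r m s : ℕ) : MonoidHom.ker (phi r m s) →* ℂˣ :=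
  (MonoidHom.fst ℂˣ (ℂˣ × ℂˣ)).comp (MonoidHom.ker (phi r m s)).subtype

/-- `ρ₂ : G → ℂ*`, projection of `G = ker φ` to the second coordinate. -/
noncomputable def rho2 (r m s : ℕ) : MonoidHom.ker (phi r m s) →* ℂˣ :=
  ((MonoidHom.fst ℂˣ ℂˣ).comp (MonoidHom.snd ℂˣ (ℂˣ × ℂˣ))).comp
    (MonoidHom.ker (phi r m s)).subtype

/-- `ρ₃ : G → ℂ*`, projection of `G = ker φ` to the third coordinate. -/
noncomputable def rho3 (r m s : ℕ) : MonoidHom.ker (phi r m s) →* ℂˣ :=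
  ((MonoidHom.snd ℂˣ ℂˣ).comp (MonoidHom.snd ℂˣ (ℂˣ × ℂˣ))).comp
    (MonoidHom.ker (phi r m s)).subtype

lemma zpow_gcdB_pow_eq_pow_gcd {G : Type*} [Group G] {x : G} {r : ℕ} (hx : x ^ r = 1)
    (s : ℕ) : (x ^ Nat.gcdB r s) ^ s = x ^ Nat.gcd r s := by
  rw [← zpow_natCast x (Nat.gcd r s), Nat.gcd_eq_gcd_ab, zpow_add, zpow_mul, zpow_natCast, hx,
    one_zpow, one_mul, ← zpow_natCast, ← zpow_mul, mul_comm]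

lemma Units.exists_pow_eq {K : Type*} [Field K] [IsAlgClosed K] (ξ : Kˣ) {n : ℕ} (hn : 0 < n) :
    ∃ η : Kˣ, η ^ n = ξ := by
  obtain ⟨z, hz⟩ := IsAlgClosed.exists_pow_nat_eq (ξ : K) hn
  have hz0 : z ≠ 0 := by
    rintro rfl
    exact ξ.ne_zero (by rw [← hz, zero_pow hn.ne'])
  exact ⟨Units.mk0 z hz0, Units.ext hz⟩

lemma exists_pow_eq_one_and_pow_eq_iff {K : Type*} [Field K] [IsAlgClosed K] {r : ℕ}
    (hr : 0 < r) (s : ℕ) (ξ : Kˣ) :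
    (∃ t : Kˣ, t ^ r = 1 ∧ t ^ s = ξ) ↔ ξ ^ (r / Nat.gcd r s) = 1 := by
  constructor
  · rintro ⟨t, ht, rfl⟩
    rw [← pow_mul, ← Nat.mul_div_assoc _ (Nat.gcd_dvd_left r s), mul_comm,
      Nat.mul_div_assoc _ (Nat.gcd_dvd_right r s), pow_mul, ht, one_pow]
  · intro hξ
    obtain ⟨η, rfl⟩ := ξ.exists_pow_eq (Nat.gcd_pos_of_pos_left s hr)
    have hη : η ^ r = 1 := by
      rwa [← pow_mul, Nat.mul_div_cancel' (Nat.gcd_dvd_left r s)] at hξ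
    refine ⟨η ^ Nat.gcdB r s, ?_, zpow_gcdB_pow_eq_pow_gcd hη s⟩
    rw [← zpow_natCast, ← zpow_mul, mul_comm, zpow_mul, zpow_natCast, hη, one_zpow]

lemma mem_ker_phi_iff {r m s : ℕ} {t : ℂˣ × ℂˣ × ℂˣ} :
    t ∈ MonoidHom.ker (phi r m s) ↔
      t.1 ^ r = 1 ∧ t.1 ^ s = t.2.1 ^ m ∧ t.2.2 = (t.1 * t.2.1)⁻¹ := by
  rw [MonoidHom.mem_ker, Prod.ext_iff, Prod.ext_iff]
  change t.1 ^ r = 1 ∧ t.1 ^ (-(s : ℤ)) * t.2.1 ^ m = 1 ∧ t.1 * t.2.1 * t.2.2 = 1 ↔ _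
  rw [zpow_neg, zpow_natCast, inv_mul_eq_one, mul_eq_one_iff_eq_inv']

lemma mem_range_rho2_iff {r m s : ℕ} {ζ : ℂˣ} :
    ζ ∈ (rho2 r m s).range ↔ ∃ t : ℂˣ, t ^ r = 1 ∧ t ^ s = ζ ^ m := by
  constructor
  · rintro ⟨⟨t, ht⟩, rfl⟩
    obtain ⟨hr, hs, -⟩ := mem_ker_phi_iff.mp ht
    exact ⟨t.1, hr, hs⟩
  · rintro ⟨t, hr, hs⟩
    exact ⟨⟨(t, ζ, (t * ζ)⁻¹), mem_ker_phi_iff.mpr ⟨hr, hs, rfl⟩⟩, rfl⟩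

noncomputable def kerRho2Equiv (r m s : ℕ) :
    MonoidHom.ker (rho2 r m s) ≃ rootsOfUnity (Nat.gcd r s) ℂ where
  toFun x := ⟨rho1 r m s x, by
    obtain ⟨hr, hs, -⟩ := mem_ker_phi_iff.mp x.1.2
    rw [show x.1.1.2.1 = 1 from x.2, one_pow] at hs
    exact (_root_.mem_rootsOfUnity _ _).mpr (pow_gcd_eq_one.mpr ⟨hr, hs⟩)⟩
  invFun ζ := ⟨⟨(ζ, 1, (ζ : ℂˣ)⁻¹), mem_ker_phi_iff.mpr
    ⟨(pow_gcd_eq_one.mp ζ.2).1, by rw [one_pow]; exact (pow_gcd_eq_one.mp ζ.2).2,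
      by rw [mul_one]⟩⟩, rfl⟩
  left_inv x := by
    have h2 : x.1.1.2.1 = 1 := x.2
    have h3 := (mem_ker_phi_iff.mp x.1.2).2.2
    rw [h2, mul_one] at h3
    exact Subtype.ext (Subtype.ext (Prod.ext rfl (Prod.ext h2.symm h3.symm)))
  right_inv _ := rfl

theorem rho2_range_and_ker_general (r m s : ℕ) (hr : 1 ≤ r) :
    (rho2 r m s).range = rootsOfUnity (m * r / Nat.gcd r s) ℂ ∧
      Nat.card (MonoidHom.ker (rho2 r m s)) = Nat.gcd r s := by
  have : NeZero (Nat.gcd r s) := ⟨(Nat.gcd_pos_of_pos_left s hr).ne'⟩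
  constructor
  · ext ζ
    rw [mem_range_rho2_iff, exists_pow_eq_one_and_pow_eq_iff hr, _root_.mem_rootsOfUnity,
      Nat.mul_div_assoc m (Nat.gcd_dvd_left r s), pow_mul]
  · rw [Nat.card_congr (kerRho2Equiv r m s), Complex.card_rootsOfUnity]

/-- The image of `ρ₂ : G → ℂ*` is exactly `μ_{mr/gcd(r,s)}`, and the kernel of `ρ₂`
has cardinality `gcd(r,s)`. -/
theorem rho2_range_and_ker (r m s : ℕ) (hr : 1 ≤ r) (hm : 1 ≤ m) (hs : s ≤ r - 1) :
    (rho2 r m s).range = rootsOfUnity (m * r / Nat.gcd r s) ℂ ∧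
      Nat.card (MonoidHom.ker (rho2 r m s)) = Nat.gcd r s :=
  rho2_range_and_ker_general r m s hr
end
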